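/- Lower bound on the lasso fit from the Karush–Kuhn–Tucker conditions (Remark 3.1 / equation in the proof of Lemma 3.1): Let c > 1, λ > 0, and suppose λ ≥ c·n·‖S‖_∞. Then any lasso estimator β̂, with T̂ = supp(β̂) and m̂ = |T̂ \ T|, satisfies (1 − 1/c)·λ·√|T̂| ≤ 2n·√φ(m̂)·((1/n)∑_{i} (x_i'β̂ − f_i)²)^{1/2}. -/

import Mathlib

open Finset MeasureTheory ProbabilityTheory

noncomputable section

/-- Prediction norm `‖δ‖_{2,n} = ((1/n) ∑_i (x_i'δ)²)^{1/2}`. -/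
def predNorm (n p : ℕ) (x : Fin n → Fin p → ℝ) (δ : Fin p → ℝ) : ℝ :=
  Real.sqrt ((n : ℝ)⁻¹ * ∑ i, (∑ j, x i j * δ j) ^ 2)

/-- Least-squares criterion `Q̂(β) = (1/n) ∑_i (y_i - x_i'β)²`. -/
def Qls (n p : ℕ) (x : Fin n → Fin p → ℝ) (y : Fin n → ℝ) (β : Fin p → ℝ) : ℝ :=
  (n : ℝ)⁻¹ * ∑ i, (y i - ∑ j, x i j * β j) ^ 2

/-- ℓ1-norm on `ℝ^p`. -/
def l1 {p : ℕ} (v : Fin p → ℝ) : ℝ := ∑ j, |v j|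

/-- sup-norm (max-absolute-coordinate norm) on `ℝ^p`. -/
def supNorm {p : ℕ} (v : Fin p → ℝ) : ℝ := ⨆ j, |v j|

/-- `restr A δ` is `δ` with coordinates outside `A` set to `0`. -/
def restr {p : ℕ} (A : Finset (Fin p)) (δ : Fin p → ℝ) : Fin p → ℝ :=
  fun j => if j ∈ A then δ j else 0

/-- Support of a vector, as a finset. -/
def suppF {p : ℕ} (v : Fin p → ℝ) : Finset (Fin p) :=
  Finset.univ.filter (fun j => v j ≠ 0)

/-- Restricted eigenvalue `κ(c̄)`. -/
def kappaRE (n p : ℕ) (x : Fin n → Fin p → ℝ) (T : Finset (Fin p)) (cbar : ℝ) : ℝ :=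
  sInf {r : ℝ | ∃ δ : Fin p → ℝ, δ ≠ 0 ∧ l1 (restr Tᶜ δ) ≤ cbar * l1 (restr T δ) ∧
    r = Real.sqrt T.card * predNorm n p x δ / l1 (restr T δ)}

/-- Restricted sparse maximal eigenvalue `φ(m)`. -/
def phiRSE (n p : ℕ) (x : Fin n → Fin p → ℝ) (T : Finset (Fin p)) (m : ℕ) : ℝ :=
  sSup {r : ℝ | ∃ δ : Fin p → ℝ, δ ≠ 0 ∧ (suppF (restr Tᶜ δ)).card ≤ m ∧
    r = (predNorm n p x δ) ^ 2 / ∑ j, δ j ^ 2}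

/-- Restricted sparse minimal eigenvalue `κ̃(m)²`. -/
def kappaTildeSq (n p : ℕ) (x : Fin n → Fin p → ℝ) (T : Finset (Fin p)) (m : ℕ) : ℝ :=
  sInf {r : ℝ | ∃ δ : Fin p → ℝ, δ ≠ 0 ∧ (suppF (restr Tᶜ δ)).card ≤ m ∧
    r = (predNorm n p x δ) ^ 2 / ∑ j, δ j ^ 2}

/-- The condition number `μ(m) = √φ(m)/κ̃(m)`. -/
def muCond (n p : ℕ) (x : Fin n → Fin p → ℝ) (T : Finset (Fin p)) (m : ℕ) : ℝ :=
  Real.sqrt (phiRSE n p x T m) / Real.sqrt (kappaTildeSq n p x T m)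

/-!
On a coordinate `j` of the support of `β̂`, shrinking `β̂ⱼ` towards `0` shows (KKT) that the
gradient of `Q̂` at `β̂` has `j`-th coordinate of absolute value at least `λ/n`. That gradient
is `(2/n) Xᵀu - S` with `u = Xβ̂ - f`, and `‖S‖_∞ ≤ λ/(cn)`, so `w = Xᵀu` satisfies
`2|wⱼ| ≥ (1 - 1/c)λ` on `T̂`. Hence `|T̂| ((1 - 1/c)λ)² ≤ 4‖w_T̂‖²`, and
`‖w_T̂‖² = ⟨X w_T̂, u⟩ ≤ √(n φ(m̂)) ‖w_T̂‖ ‖u‖` because `w_T̂` has at most `m̂` coordinates outside `T`.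
-/

open Filter Topology

theorem le_supNorm {p : ℕ} (v : Fin p → ℝ) (j : Fin p) : |v j| ≤ supNorm v :=
  le_ciSup (f := fun k => |v k|) (Finite.bddAbove_range _) j

theorem l1_sub_smul_single {p : ℕ} (β : Fin p → ℝ) (j : Fin p) {t : ℝ} (ht : t ≤ 1) :
    l1 (β - t • (Pi.single j (β j) : Fin p → ℝ)) = l1 β - t * |β j| := by
  have hcoord : ∀ k, |(β - t • (Pi.single j (β j) : Fin p → ℝ)) k|
      = |β k| - t * (Pi.single j |β j| : Fin p → ℝ) k := by
    intro k
    rcases eq_or_ne k j with rfl | hk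
    · simp only [Pi.sub_apply, Pi.smul_apply, Pi.single_eq_same, smul_eq_mul]
      rw [show β k - t * β k = (1 - t) * β k by ring, abs_mul, abs_of_nonneg (by linarith)]
      ring
    · simp [hk]
  simp only [l1, hcoord, Finset.sum_sub_distrib, ← Finset.mul_sum, Finset.sum_pi_single',
    Finset.mem_univ, if_true]

section LeastSquares

variable {n p : ℕ} (x : Fin n → Fin p → ℝ)

theorem mean_sq_add_smul (r v : Fin n → ℝ) (t : ℝ) :
    (n : ℝ)⁻¹ * ∑ i, (r i + t * v i) ^ 2 = (n : ℝ)⁻¹ * ∑ i, r i ^ 2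
      + t * ((2 / n) * ∑ i, r i * v i) + t ^ 2 * ((n : ℝ)⁻¹ * ∑ i, v i ^ 2) := by
  simp only [Finset.mul_sum, ← Finset.sum_add_distrib]
  exact Finset.sum_congr rfl fun i _ => by ring

theorem Qls_sub_smul (y : Fin n → ℝ) (β d : Fin p → ℝ) (t : ℝ) :
    Qls n p x y (β - t • d) = Qls n p x y β
      + t * ((2 / n) * ∑ i, (y i - ∑ j, x i j * β j) * ∑ j, x i j * d j)
      + t ^ 2 * ((n : ℝ)⁻¹ * ∑ i, (∑ j, x i j * d j) ^ 2) := by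
  have hres : ∀ i, y i - ∑ j, x i j * (β - t • d) j
      = (y i - ∑ j, x i j * β j) + t * ∑ j, x i j * d j := by
    intro i
    simp only [Pi.sub_apply, Pi.smul_apply, smul_eq_mul, mul_sub, Finset.sum_sub_distrib,
      Finset.mul_sum, mul_left_comm t]
    ring
  simp only [Qls, hres]
  exact mean_sq_add_smul _ _ t

theorem lasso_kkt {y : Fin n → ℝ} {lam : ℝ} {βhat : Fin p → ℝ}
    (hmin : ∀ β, Qls n p x y βhat + lam / n * l1 βhat ≤ Qls n p x y β + lam / n * l1 β)
    {j : Fin p} (hj : βhat j ≠ 0) :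
    lam / n ≤ |(2 / n) * ∑ i, (y i - ∑ k, x i k * βhat k) * x i j| := by
  set G := (2 / n : ℝ) * ∑ i, (y i - ∑ k, x i k * βhat k) * x i j
  set a := (n : ℝ)⁻¹ * ∑ i, x i j ^ 2
  -- Replacing `βhat j` by `(1 - t) βhat j` saves `t λ/n |βhat j|` of penalty at a cost of
  -- `t βhat j G + O(t²)` in `Qls`.
  have hdir : ∀ t ∈ Set.Ioo (0 : ℝ) 1,
      lam / n * |βhat j| ≤ βhat j * G + t * (βhat j ^ 2 * a) := by
    rintro t ⟨ht0, ht1⟩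
    have h := hmin (βhat - t • (Pi.single j (βhat j) : Fin p → ℝ))
    have hsingle : ∀ i, ∑ k, x i k * (Pi.single j (βhat j) : Fin p → ℝ) k = x i j * βhat j := by
      simp [Pi.single_apply]
    rw [Qls_sub_smul, l1_sub_smul_single _ _ ht1.le] at h
    simp only [hsingle] at h
    have hG : (2 / n : ℝ) * ∑ i, (y i - ∑ k, x i k * βhat k) * (x i j * βhat j) = βhat j * G := by
      simp only [G, Finset.mul_sum]
      exact Finset.sum_congr rfl fun i _ => by ring
    have ha : (n : ℝ)⁻¹ * ∑ i, (x i j * βhat j) ^ 2 = βhat j ^ 2 * a := by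
      simp only [a, Finset.mul_sum]
      exact Finset.sum_congr rfl fun i _ => by ring
    rw [hG, ha] at h
    refine le_of_mul_le_mul_left ?_ ht0
    linarith
  have hlim : Tendsto (fun t => βhat j * G + t * (βhat j ^ 2 * a)) (𝓝[>] 0) (𝓝 (βhat j * G)) :=
    tendsto_nhdsWithin_of_tendsto_nhds ((by fun_prop : Continuous
      fun t : ℝ => βhat j * G + t * (βhat j ^ 2 * a)).tendsto' 0 _ (by simp))
  have hkkt : lam / n * |βhat j| ≤ |G| * |βhat j| :=
    calc lam / n * |βhat j| ≤ βhat j * G :=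
          ge_of_tendsto hlim (eventually_of_mem (Ioo_mem_nhdsGT one_pos) hdir)
      _ ≤ |G| * |βhat j| := by rw [mul_comm, ← abs_mul]; exact le_abs_self _
  exact le_of_mul_le_mul_right hkkt (abs_pos.2 hj)

theorem lasso_fit_correlation_ge (hn : 0 < n)
    {y f : Fin n → ℝ} {c lam : ℝ} (hc : 0 < c) {βhat : Fin p → ℝ}
    (hmin : ∀ β, Qls n p x y βhat + lam / n * l1 βhat ≤ Qls n p x y β + lam / n * l1 β)
    (hlamS : c * n * supNorm (fun j => (2 / n : ℝ) * ∑ i, (y i - f i) * x i j) ≤ lam)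
    {j : Fin p} (hj : βhat j ≠ 0) :
    (1 - 1 / c) * lam ≤ 2 * |∑ i, (∑ k, x i k * βhat k - f i) * x i j| := by
  set S := fun j => (2 / n : ℝ) * ∑ i, (y i - f i) * x i j
  set w := ∑ i, (∑ k, x i k * βhat k - f i) * x i j
  have hn' : (0 : ℝ) < n := Nat.cast_pos.mpr hn
  have hgrad : (2 / n : ℝ) * ∑ i, (y i - ∑ k, x i k * βhat k) * x i j = S j - 2 / n * w := by
    simp only [S, w, ← mul_sub, ← Finset.sum_sub_distrib]
    exact congrArg _ (Finset.sum_congr rfl fun i _ => by ring)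
  have hkkt := lasso_kkt x hmin hj
  rw [hgrad] at hkkt
  have htri : |S j - 2 / n * w| ≤ |S j| + 2 / n * |w| := by
    simpa only [abs_mul, abs_of_pos (by positivity : (0 : ℝ) < 2 / n)] using
      abs_sub (S j) (2 / n * w)
  have hSj : n * |S j| ≤ lam / c := by
    rw [le_div_iff₀ hc]
    calc n * |S j| * c = c * n * |S j| := by ring
      _ ≤ c * n * supNorm S := by gcongr; exact le_supNorm S j
      _ ≤ lam := hlamS
  have hlam : lam ≤ n * |S j| + 2 * |w| := by
    calc lam = lam / n * n := by field_simp
      _ ≤ (|S j| + 2 / n * |w|) * n := by gcongr; exact hkkt.trans htri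
      _ = n * |S j| + 2 * |w| := by field_simp
  calc (1 - 1 / c) * lam = lam - lam / c := by ring
    _ ≤ 2 * |w| := by linarith

end LeastSquares

theorem sum_sq_pos_of_ne_zero {p : ℕ} {v : Fin p → ℝ} (hv : v ≠ 0) : 0 < ∑ j, v j ^ 2 := by
  obtain ⟨j, hj⟩ := Function.ne_iff.mp hv
  exact Finset.sum_pos' (fun _ _ => sq_nonneg _) ⟨j, Finset.mem_univ _, sq_pos_of_ne_zero hj⟩

section SparseEigenvalue

variable {n p : ℕ} (x : Fin n → Fin p → ℝ)

theorem predNorm_sq (δ : Fin p → ℝ) :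
    predNorm n p x δ ^ 2 = (n : ℝ)⁻¹ * ∑ i, (∑ j, x i j * δ j) ^ 2 :=
  Real.sq_sqrt (by positivity)

theorem predNorm_sq_le (δ : Fin p → ℝ) :
    predNorm n p x δ ^ 2 ≤ ((n : ℝ)⁻¹ * ∑ i, ∑ j, x i j ^ 2) * ∑ j, δ j ^ 2 := by
  rw [predNorm_sq, mul_assoc, Finset.sum_mul]
  gcongr with i
  exact Finset.sum_mul_sq_le_sq_mul_sq _ _ _

theorem phiRSE_nonneg (T : Finset (Fin p)) (m : ℕ) : 0 ≤ phiRSE n p x T m :=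
  Real.sSup_nonneg fun _ ⟨_, _, _, hr⟩ => hr ▸ by positivity

theorem predNorm_sq_le_phiRSE_mul {T : Finset (Fin p)} {m : ℕ} {δ : Fin p → ℝ}
    (hδ : (suppF (restr Tᶜ δ)).card ≤ m) :
    predNorm n p x δ ^ 2 ≤ phiRSE n p x T m * ∑ j, δ j ^ 2 := by
  rcases eq_or_ne δ 0 with rfl | hδ0
  · simp [predNorm]
  have hbdd : BddAbove {r : ℝ | ∃ δ : Fin p → ℝ, δ ≠ 0 ∧ (suppF (restr Tᶜ δ)).card ≤ m ∧
      r = (predNorm n p x δ) ^ 2 / ∑ j, δ j ^ 2} := by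
    refine ⟨(n : ℝ)⁻¹ * ∑ i, ∑ j, x i j ^ 2, fun r ⟨v, hv0, _, hr⟩ => hr ▸ ?_⟩
    rw [div_le_iff₀ (sum_sq_pos_of_ne_zero hv0)]
    exact predNorm_sq_le x v
  rw [← div_le_iff₀ (sum_sq_pos_of_ne_zero hδ0)]
  exact le_csSup hbdd ⟨δ, hδ0, hδ, rfl⟩

theorem card_suppF_restr_compl_restr_le (A T : Finset (Fin p)) (w : Fin p → ℝ) :
    (suppF (restr Tᶜ (restr A w))).card ≤ (A \ T).card :=
  Finset.card_le_card fun j hj => by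
    by_contra h
    simp_all [suppF, restr]

theorem sum_sq_transpose_mul_le_phiRSE (T A : Finset (Fin p)) (u : Fin n → ℝ) :
    ∑ j ∈ A, (∑ i, u i * x i j) ^ 2 ≤ n * phiRSE n p x T (A \ T).card * ∑ i, u i ^ 2 := by
  rcases n.eq_zero_or_pos with rfl | hn
  · simp
  set w := fun j => ∑ i, u i * x i j
  set δ := restr A w
  set φ := phiRSE n p x T (A \ T).card
  set D := ∑ j ∈ A, w j ^ 2
  have hDδ : D = ∑ j, δ j ^ 2 := by
    simp [D, δ, restr, apply_ite (· ^ 2 : ℝ → ℝ), Finset.sum_ite_mem]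
  have hDw : D = ∑ i, u i * ∑ j, x i j * δ j := by
    have : D = ∑ j, δ j * w j := by
      simp [D, δ, restr, ite_mul, Finset.sum_ite_mem, sq]
    simp only [this, w, Finset.mul_sum]
    rw [Finset.sum_comm]
    exact Finset.sum_congr rfl fun i _ => Finset.sum_congr rfl fun j _ => by ring
  have hXδ : ∑ i, (∑ j, x i j * δ j) ^ 2 ≤ n * (φ * D) := by
    have h := predNorm_sq_le_phiRSE_mul x (card_suppF_restr_compl_restr_le A T w)
    rwa [predNorm_sq, ← hDδ, inv_mul_le_iff₀ (by positivity)] at h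
  have hCS : D * D ≤ D * (n * φ * ∑ i, u i ^ 2) :=
    calc D * D ≤ (∑ i, u i ^ 2) * ∑ i, (∑ j, x i j * δ j) ^ 2 :=
          sq D ▸ hDw ▸ Finset.sum_mul_sq_le_sq_mul_sq _ _ _
      _ ≤ (∑ i, u i ^ 2) * (n * (φ * D)) := by gcongr
      _ = D * (n * φ * ∑ i, u i ^ 2) := by ring
  rcases (show 0 ≤ D by positivity).eq_or_lt with hD0 | hDpos
  · rw [← hD0]
    have := phiRSE_nonneg x T (A \ T).card
    positivity
  · exact le_of_mul_le_mul_left hCS hDpos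

end SparseEigenvalue

theorem lasso_fit_lower_bound_general
    (n p : ℕ) (hn : 0 < n)
    (x : Fin n → Fin p → ℝ) (y f : Fin n → ℝ)
    (T : Finset (Fin p))
    (c : ℝ) (hc : 1 < c)
    (S : Fin p → ℝ) (hS : S = fun j => (2 / n : ℝ) * ∑ i, (y i - f i) * x i j)
    (lam : ℝ) (hlam : 0 < lam) (hlamS : c * n * supNorm S ≤ lam)
    (βhat : Fin p → ℝ)
    (hβhat : ∀ β : Fin p → ℝ,
      Qls n p x y βhat + lam / n * l1 βhat ≤ Qls n p x y β + lam / n * l1 β)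
    (That : Finset (Fin p)) (hThat : That = suppF βhat)
    (mhat : ℕ) (hmhat : mhat = (That \ T).card) :
    (1 - 1 / c) * lam * Real.sqrt That.card ≤
      2 * n * Real.sqrt (phiRSE n p x T mhat) *
        Real.sqrt ((n : ℝ)⁻¹ * ∑ i, ((∑ j, x i j * βhat j) - f i) ^ 2) := by
  subst hS hThat hmhat
  set a := (1 - 1 / c) * lam
  set φ := phiRSE n p x T (suppF βhat \ T).card
  set U := ∑ i, ((∑ j, x i j * βhat j) - f i) ^ 2
  have ha : 0 ≤ a := mul_nonneg (sub_nonneg.mpr ((div_le_one (by linarith)).mpr hc.le)) hlam.le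
  have hcoord : ∀ j ∈ suppF βhat,
      a ^ 2 ≤ 4 * (∑ i, (∑ k, x i k * βhat k - f i) * x i j) ^ 2 := fun j hj => by
    have h := lasso_fit_correlation_ge x hn (by linarith) hβhat hlamS (Finset.mem_filter.mp hj).2
    calc a ^ 2 ≤ (2 * |∑ i, (∑ k, x i k * βhat k - f i) * x i j|) ^ 2 := pow_le_pow_left₀ ha h 2
      _ = _ := by rw [mul_pow, sq_abs]; norm_num
  have hcard : a ^ 2 * (suppF βhat).card
      ≤ 4 * ∑ j ∈ suppF βhat, (∑ i, (∑ k, x i k * βhat k - f i) * x i j) ^ 2 := by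
    simpa [nsmul_eq_mul, Finset.mul_sum, mul_comm] using Finset.card_nsmul_le_sum _ _ _ hcoord
  have heig := sum_sq_transpose_mul_le_phiRSE x T (suppF βhat) fun i => ∑ j, x i j * βhat j - f i
  refine le_of_pow_le_pow_left₀ two_ne_zero (by positivity) ?_
  simp only [mul_pow]
  rw [Real.sq_sqrt (Nat.cast_nonneg _), Real.sq_sqrt (phiRSE_nonneg x _ _),
    Real.sq_sqrt (by positivity)]
  calc a ^ 2 * (suppF βhat).card ≤ 4 * (n * φ * U) := hcard.trans (by gcongr)
    _ = (2 ^ 2 * n ^ 2 * φ) * ((n : ℝ)⁻¹ * U) := by field_simp; ring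

/-- Remark 3.1: lower bound on the lasso fit from the KKT conditions. -/
theorem lasso_fit_lower_bound
    (n p : ℕ) (hn : 0 < n) (hp : 0 < p)
    (x : Fin n → Fin p → ℝ) (y f : Fin n → ℝ)
    (hx : ∀ j, (n : ℝ)⁻¹ * ∑ i, x i j ^ 2 = 1)
    (β0 : Fin p → ℝ) (T : Finset (Fin p)) (hT : T = suppF β0)
    (c : ℝ) (hc : 1 < c)
    (S : Fin p → ℝ) (hS : S = fun j => (2 / n : ℝ) * ∑ i, (y i - f i) * x i j)
    (lam : ℝ) (hlam : 0 < lam) (hlamS : c * n * supNorm S ≤ lam)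
    (βhat : Fin p → ℝ)
    (hβhat : ∀ β : Fin p → ℝ,
      Qls n p x y βhat + lam / n * l1 βhat ≤ Qls n p x y β + lam / n * l1 β)
    (That : Finset (Fin p)) (hThat : That = suppF βhat)
    (mhat : ℕ) (hmhat : mhat = (That \ T).card) :
    (1 - 1 / c) * lam * Real.sqrt That.card ≤
      2 * n * Real.sqrt (phiRSE n p x T mhat) *
        Real.sqrt ((n : ℝ)⁻¹ * ∑ i, ((∑ j, x i j * βhat j) - f i) ^ 2) :=
  lasso_fit_lower_bound_general n p hn x y f T c hc S hS lam hlam hlamS βhat hβhat That hThat mhat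
    hmhat
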